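/- arXiv:1801.01734 — 2 statements merged into one kernel-verified Lean document; each statement's English description precedes it below -/
import Mathlib

section
/- Let E be a real separable Hilbert space with orthonormal basis {e_i}, Ω ⊆ E an open set, and K ⊆ Ω compact. Then there exist an open bounded set U ⊆ E and N ∈ ℕ such that K ⊆ U ⊆ cl U ⊆ Ω and Pₙ(cl U) ⊆ Ω for all n ≥ N, where Pₙ is the orthogonal projection onto span{e₁,…,eₙ}. -/
open Bornology RealInnerProductSpace Topology

/-- Orthogonal projection onto the span of the first `n` vectors of the
orthonormal (Hilbert) basis `b`. -/
noncomputable def projN {E : Type*} [NormedAddCommGroup E] [InnerProductSpace ℝ E]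
    (b : HilbertBasis ℕ ℝ E) (n : ℕ) (x : E) : E :=
  ∑ i ∈ Finset.range n, ⟪b i, x⟫ • b i

lemma projN_sub {E : Type*} [NormedAddCommGroup E] [InnerProductSpace ℝ E]
    (b : HilbertBasis ℕ ℝ E) (n : ℕ) (x y : E) :
    projN b n (x - y) = projN b n x - projN b n y := by
  simp [projN, inner_sub_right, sub_smul, Finset.sum_sub_distrib]

lemma norm_projN_le {E : Type*} [NormedAddCommGroup E] [InnerProductSpace ℝ E]
    (b : HilbertBasis ℕ ℝ E) (n : ℕ) (x : E) : ‖projN b n x‖ ≤ ‖x‖ := by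
  have hb : Orthonormal ℝ b := b.orthonormal
  have h1 : ‖projN b n x‖ ^ 2 = ∑ i ∈ Finset.range n, ‖⟪b i, x⟫‖ ^ 2 := by
    rw [projN, ← real_inner_self_eq_norm_sq,
      hb.inner_sum (fun i => ⟪b i, x⟫) (fun i => ⟪b i, x⟫) (Finset.range n)]
    simp only [Real.norm_eq_abs, sq_abs]
    exact Finset.sum_congr rfl fun i _ => (pow_two _).symm
  have h2 := hb.sum_inner_products_le (s := Finset.range n) x
  nlinarith [norm_nonneg (projN b n x), norm_nonneg x]

lemma tendsto_projN {E : Type*} [NormedAddCommGroup E] [InnerProductSpace ℝ E]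
    [CompleteSpace E] (b : HilbertBasis ℕ ℝ E) (x : E) :
    Filter.Tendsto (fun n => projN b n x) Filter.atTop (nhds x) := by
  have := (b.hasSum_repr x).tendsto_sum_nat
  simp only [b.repr_apply_apply] at this
  exact this

/-- For a compact subset `K` of an open set `Ω` in a real separable Hilbert space there
is an open bounded `U` with `K ⊆ U ⊆ cl U ⊆ Ω` and `Pₙ(cl U) ⊆ Ω` for all large `n`. -/
theorem stmt6 {E : Type*} [NormedAddCommGroup E] [InnerProductSpace ℝ E]
    [CompleteSpace E] (b : HilbertBasis ℕ ℝ E)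
    (Ω : Set E) (hΩ : IsOpen Ω) (K : Set E) (hK : IsCompact K) (hKΩ : K ⊆ Ω) :
    ∃ (U : Set E) (N : ℕ), IsOpen U ∧ IsBounded U ∧ K ⊆ U ∧ closure U ⊆ Ω ∧
      ∀ n ≥ N, projN b n '' closure U ⊆ Ω := by
  rcases K.eq_empty_or_nonempty with rfl | hne
  · exact ⟨∅, 0, isOpen_empty, isBounded_empty, Set.empty_subset _, by simp, by simp⟩
  obtain ⟨δ, hδ, hth⟩ := hK.exists_thickening_subset_open hΩ hKΩ
  -- uniform convergence of projN on K
  obtain ⟨t, htK, hcov⟩ := hK.elim_nhds_subcover (fun y => Metric.ball y (δ/6))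
    (fun y _ => Metric.ball_mem_nhds y (by linarith))
  have hev : ∀ᶠ n in Filter.atTop, ∀ y ∈ t, ‖projN b n y - y‖ < δ/6 := by
    rw [Filter.eventually_all_finset]
    intro y _
    have := (tendsto_projN b y).sub_const y
    rw [sub_self] at this
    have := this.norm
    rw [norm_zero] at this
    exact this.eventually_lt_const (by linarith)
  obtain ⟨N, hN⟩ := Filter.eventually_atTop.1 hev
  have hclΩ : closure (Metric.thickening (δ/3) K) ⊆ Ω := by
    calc closure (Metric.thickening (δ/3) K) ⊆ Metric.cthickening (δ/3) K :=
          Metric.closure_thickening_subset_cthickening _ _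
      _ ⊆ Metric.thickening δ K :=
          Metric.cthickening_subset_thickening' hδ (by linarith) K
      _ ⊆ Ω := hth
  refine ⟨Metric.thickening (δ/3) K, N, Metric.isOpen_thickening,
    hK.isBounded.thickening, Metric.self_subset_thickening (by linarith) K, hclΩ,
    fun n hn z hz => ?_⟩
  obtain ⟨x, hx, rfl⟩ := hz
  have hxc : x ∈ Metric.thickening (δ/2) K :=
    Metric.cthickening_subset_thickening' (by linarith) (by linarith) K
      (Metric.closure_thickening_subset_cthickening _ _ hx)
  obtain ⟨k, hk, hdk3⟩ := Metric.mem_thickening_iff.1 hxc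
  obtain ⟨y, hy, hky⟩ := Set.mem_iUnion₂.1 (hcov hk)
  apply hth
  rw [Metric.mem_thickening_iff]
  refine ⟨k, hk, ?_⟩
  have e1 : ‖projN b n x - projN b n k‖ ≤ δ/2 := by
    rw [← projN_sub]
    calc ‖projN b n (x - k)‖ ≤ ‖x - k‖ := norm_projN_le b n _
      _ ≤ δ/2 := by rw [← dist_eq_norm]; exact hdk3.le
  have e2 : ‖projN b n k - projN b n y‖ ≤ δ/6 := by
    rw [← projN_sub]
    calc ‖projN b n (k - y)‖ ≤ ‖k - y‖ := norm_projN_le b n _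
      _ ≤ δ/6 := by rw [← dist_eq_norm]; exact (Metric.mem_ball.1 hky).le
  have e3 : ‖projN b n y - y‖ < δ/6 := hN n hn y hy
  have e4 : ‖y - k‖ ≤ δ/6 := by
    rw [← dist_eq_norm, dist_comm]; exact (Metric.mem_ball.1 hky).le
  have : projN b n x - k = (projN b n x - projN b n k) + (projN b n k - projN b n y)
      + (projN b n y - y) + (y - k) := by abel
  rw [dist_eq_norm, this]
  calc ‖_ + _ + _ + _‖ ≤ ‖_ + _ + _‖ + ‖y - k‖ := norm_add_le _ _
    _ ≤ ‖_ + _‖ + ‖projN b n y - y‖ + ‖y - k‖ := by gcongr; exact norm_add_le _ _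
    _ ≤ ‖projN b n x - projN b n k‖ + ‖projN b n k - projN b n y‖ + ‖projN b n y - y‖ + ‖y - k‖ := by
        gcongr; exact norm_add_le _ _
    _ < δ := by linarith
end

section
/- Let E be a real separable Hilbert space with orthonormal basis {e_i}, Vₙ = span{e₁,…,eₙ}, Ω ⊆ E open and connected, and K ⊆ Ω ∩ Vₙ compact. Then there exists m ≥ n such that K is contained in a single connected component of Ω ∩ Vₘ. -/
open Bornology RealInnerProductSpace Topology

/-!
Fix `x ∈ Ω ∩ Vₖ` and let `C` be the union over `m` of the components of `x` in `Ω ∩ Vₘ`.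
Balls are convex, so a ball inside `Ω` that meets `C` contains no point of `⋃ Vₘ` outside `C`.
As `⋃ Vₘ` is dense, `Ω ∩ closure C` is therefore open; it is also relatively closed, hence all
of `Ω` by connectedness, and every point of `Ω ∩ ⋃ Vₘ` is joined to `x` inside some `Ω ∩ Vₘ`.
Uniformity in `m` over `K` comes from compactness of `K × K`, using once more that the small
balls around points of `K` stay in `Ω`.
-/

open Filter Metric Set

theorem IsCompact.eventually_forall_of_forall_eventually_prod_nhds {X ι : Type*}
    [TopologicalSpace X] {K : Set X} (hK : IsCompact K) {l : Filter ι} {P : ι × X → Prop}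
    (h : ∀ x ∈ K, ∀ᶠ q in l ×ˢ 𝓝 x, P q) :
    ∀ᶠ i in l, ∀ x ∈ K, P (i, x) :=
  Eventually.curry (hK.mem_prod_nhdsSet_of_forall h) |>.mono fun _ hi ↦ hi.self_of_nhdsSet

section ConnectedComponentIn

variable {E : Type*} [NormedAddCommGroup E] [NormedSpace ℝ E] {Ω S : Set E}

theorem connectedComponentIn_inter_eq_of_convex {C : Set E} (hC : Convex ℝ C) (hCΩ : C ⊆ Ω)
    (hS : Convex ℝ S) {x y : E} (hx : x ∈ C ∩ S) (hy : y ∈ C ∩ S) :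
    connectedComponentIn (Ω ∩ S) x = connectedComponentIn (Ω ∩ S) y :=
  connectedComponentIn_eq <| (hC.inter hS).isPreconnected.subset_connectedComponentIn hx
    (inter_subset_inter_left S hCΩ) hy

theorem eventually_nhds_connectedComponentIn_inter_eq (hΩ : IsOpen Ω) {x : E} (hx : x ∈ Ω) :
    ∀ᶠ y in 𝓝 x, ∀ S : Set E, Convex ℝ S → x ∈ S → y ∈ S →
      connectedComponentIn (Ω ∩ S) y = connectedComponentIn (Ω ∩ S) x := by
  obtain ⟨r, hr, hrΩ⟩ := isOpen_iff.mp hΩ x hx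
  filter_upwards [ball_mem_nhds x hr] with y hy S hS hxS hyS
  exact connectedComponentIn_inter_eq_of_convex (convex_ball x r) hrΩ hS ⟨hy, hyS⟩
    ⟨mem_ball_self hr, hxS⟩

end ConnectedComponentIn

section Exhaustion

variable {E : Type*} [NormedAddCommGroup E] [NormedSpace ℝ E] {V : ℕ → Submodule ℝ E}
  {Ω : Set E}

theorem inter_iUnion_subset_iUnion_connectedComponentIn (hV : Monotone V) {B : Set E}
    (hB : Convex ℝ B) (hBΩ : B ⊆ Ω) (x : E)
    (hBx : (B ∩ ⋃ m, connectedComponentIn (Ω ∩ V m) x).Nonempty) :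
    B ∩ ⋃ l, (V l : Set E) ⊆ ⋃ m, connectedComponentIn (Ω ∩ V m) x := by
  obtain ⟨z, hzB, hzx⟩ := hBx
  obtain ⟨m, hzm⟩ := mem_iUnion.mp hzx
  rintro w ⟨hwB, hwV⟩
  obtain ⟨l, hwl⟩ := mem_iUnion.mp hwV
  have hzx' : z ∈ connectedComponentIn (Ω ∩ V (m ⊔ l)) x :=
    connectedComponentIn_mono x (inter_subset_inter_right Ω (hV le_sup_left)) hzm
  have hz : z ∈ V (m ⊔ l) := (connectedComponentIn_subset _ _ hzx').2
  refine mem_iUnion.mpr ⟨m ⊔ l, ?_⟩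
  rw [connectedComponentIn_eq hzx', connectedComponentIn_inter_eq_of_convex hB hBΩ
    (V (m ⊔ l)).convex ⟨hzB, hz⟩ ⟨hwB, hV le_sup_right hwl⟩]
  exact mem_connectedComponentIn ⟨hBΩ hwB, hV le_sup_right hwl⟩

theorem exists_mem_connectedComponentIn_of_dense (hV : Monotone V)
    (hdense : Dense (⋃ m, (V m : Set E))) (hΩo : IsOpen Ω) (hΩc : IsPreconnected Ω)
    {x y : E} {k l : ℕ} (hx : x ∈ Ω ∩ V k) (hy : y ∈ Ω ∩ V l) :
    ∃ m, y ∈ connectedComponentIn (Ω ∩ V m) x := by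
  set C := ⋃ m, connectedComponentIn (Ω ∩ V m) x
  have hballC :
      ∀ z ∈ Ω ∩ closure C, ∃ r > 0, ball z r ⊆ Ω ∧ ball z r ∩ ⋃ l, (V l : Set E) ⊆ C := by
    rintro z ⟨hzΩ, hzC⟩
    obtain ⟨r, hr, hrΩ⟩ := isOpen_iff.mp hΩo z hzΩ
    exact ⟨r, hr, hrΩ, inter_iUnion_subset_iUnion_connectedComponentIn hV (convex_ball z r) hrΩ x
      (mem_closure_iff.mp hzC _ isOpen_ball (mem_ball_self hr))⟩
  have hopen : IsOpen (Ω ∩ closure C) := by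
    refine isOpen_iff.mpr fun z hz ↦ ?_
    obtain ⟨r, hr, hrΩ, hrC⟩ := hballC z hz
    exact ⟨r, hr, subset_inter hrΩ
      ((hdense.open_subset_closure_inter isOpen_ball).trans (closure_mono hrC))⟩
  have hxC : x ∈ C := mem_iUnion.mpr ⟨k, mem_connectedComponentIn hx⟩
  have hΩC : Ω ⊆ Ω ∩ closure C :=
    hΩc.subset_of_closure_inter_subset hopen ⟨x, hx.1, hx.1, subset_closure hxC⟩
      fun z ⟨hz, hzΩ⟩ ↦ ⟨hzΩ, closure_minimal inter_subset_right isClosed_closure hz⟩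
  obtain ⟨r, hr, -, hrC⟩ := hballC y (hΩC hy.1)
  exact mem_iUnion.mp (hrC ⟨mem_ball_self hr, mem_iUnion.mpr ⟨l, hy.2⟩⟩)

theorem exists_connectedComponentIn_eq_of_dense (hV : Monotone V)
    (hdense : Dense (⋃ m, (V m : Set E))) (hΩo : IsOpen Ω) (hΩc : IsPreconnected Ω)
    {n : ℕ} {K : Set E} (hK : IsCompact K) (hKΩ : K ⊆ Ω ∩ V n) :
    ∃ m ≥ n, ∀ x ∈ K, ∀ y ∈ K,
      connectedComponentIn (Ω ∩ V m) x = connectedComponentIn (Ω ∩ V m) y := by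
  have hlinked : ∀ x ∈ K, ∀ y ∈ K, ∀ᶠ m in atTop,
      connectedComponentIn (Ω ∩ V m) x = connectedComponentIn (Ω ∩ V m) y := by
    intro x hx y hy
    obtain ⟨m, hm⟩ := exists_mem_connectedComponentIn_of_dense hV hdense hΩo hΩc (hKΩ hx) (hKΩ hy)
    filter_upwards [eventually_ge_atTop m] with m' hm'
    exact connectedComponentIn_eq
      (connectedComponentIn_mono x (inter_subset_inter_right Ω (hV hm')) hm)
  have hlocal : ∀ p ∈ K ×ˢ K, ∀ᶠ q : ℕ × (E × E) in atTop ×ˢ 𝓝 p, n ≤ q.1 → q.2 ∈ K ×ˢ K →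
      connectedComponentIn (Ω ∩ V q.1) q.2.1 = connectedComponentIn (Ω ∩ V q.1) q.2.2 := by
    rintro ⟨x, y⟩ ⟨hx, hy⟩
    have hnear := (eventually_nhds_connectedComponentIn_inter_eq hΩo (hKΩ hx).1).prod_nhds
      (eventually_nhds_connectedComponentIn_inter_eq hΩo (hKΩ hy).1)
    filter_upwards [(hlinked x hx y hy).prod_mk hnear]
      with ⟨m, x', y'⟩ ⟨hxy, hx', hy'⟩ hm ⟨hx'K, hy'K⟩
    have hVn : V n ≤ V m := hV hm
    rw [hx' _ (V m).convex (hVn (hKΩ hx).2) (hVn (hKΩ hx'K).2),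
      hy' _ (V m).convex (hVn (hKΩ hy).2) (hVn (hKΩ hy'K).2), hxy]
  obtain ⟨m, hm, hnm⟩ := ((hK.prod hK).eventually_forall_of_forall_eventually_prod_nhds hlocal).and
    (eventually_ge_atTop n) |>.exists
  exact ⟨m, hnm, fun x hx y hy ↦ hm (x, y) ⟨hx, hy⟩ hnm ⟨hx, hy⟩⟩

end Exhaustion

theorem Submodule.monotone_span_image_Iio {R M ι : Type*} [Semiring R] [AddCommMonoid M]
    [Module R M] [Preorder ι] (v : ι → M) : Monotone fun i ↦ span R (v '' Iio i) :=
  fun _ _ h ↦ span_mono (image_mono (Iio_subset_Iio h))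

theorem HilbertBasis.dense_iUnion_span_image_Iio {𝕜 E : Type*} [RCLike 𝕜] [NormedAddCommGroup E]
    [InnerProductSpace 𝕜 E] (b : HilbertBasis ℕ 𝕜 E) :
    Dense (⋃ m, (Submodule.span 𝕜 (b '' Iio m) : Set E)) := by
  rw [← Submodule.coe_iSup_of_directed _ (Submodule.monotone_span_image_Iio b).directed_le,
    Submodule.dense_iff_topologicalClosure_eq_top, eq_top_iff, ← b.dense_span]
  refine Submodule.topologicalClosure_mono (Submodule.span_le.mpr ?_)
  rintro _ ⟨i, rfl⟩
  exact Submodule.mem_iSup_of_mem (i + 1) (Submodule.subset_span ⟨i, lt_add_one i, rfl⟩)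

theorem stmt8_general {E : Type*} [NormedAddCommGroup E] [InnerProductSpace ℝ E]
    (b : HilbertBasis ℕ ℝ E)
    (Ω : Set E) (hΩo : IsOpen Ω) (hΩc : IsConnected Ω)
    (n : ℕ) (K : Set E) (hK : IsCompact K)
    (hKΩ : K ⊆ Ω ∩ (Submodule.span ℝ (b '' Set.Iio n) : Submodule ℝ E)) :
    ∃ m ≥ n, ∀ x ∈ K, ∀ y ∈ K,
      connectedComponentIn (Ω ∩ (Submodule.span ℝ (b '' Set.Iio m) : Submodule ℝ E)) x =
      connectedComponentIn (Ω ∩ (Submodule.span ℝ (b '' Set.Iio m) : Submodule ℝ E)) y :=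
  exists_connectedComponentIn_eq_of_dense (Submodule.monotone_span_image_Iio b)
    b.dense_iUnion_span_image_Iio hΩo hΩc.isPreconnected hK hKΩ

/-- If `Ω` is open connected and `K ⊆ Ω ∩ Vₙ` is compact, then `K` lies in a single
connected component of `Ω ∩ Vₘ` for `m` large enough. -/
theorem stmt8 {E : Type*} [NormedAddCommGroup E] [InnerProductSpace ℝ E]
    [CompleteSpace E] (b : HilbertBasis ℕ ℝ E)
    (Ω : Set E) (hΩo : IsOpen Ω) (hΩc : IsConnected Ω)
    (n : ℕ) (K : Set E) (hK : IsCompact K)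
    (hKΩ : K ⊆ Ω ∩ (Submodule.span ℝ (b '' Set.Iio n) : Submodule ℝ E)) :
    ∃ m ≥ n, ∀ x ∈ K, ∀ y ∈ K,
      connectedComponentIn (Ω ∩ (Submodule.span ℝ (b '' Set.Iio m) : Submodule ℝ E)) x =
      connectedComponentIn (Ω ∩ (Submodule.span ℝ (b '' Set.Iio m) : Submodule ℝ E)) y :=
  stmt8_general b Ω hΩo hΩc n K hK hKΩ
end
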